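/- arXiv:1211.0407 — 2 statements merged into one kernel-verified Lean document; each statement's English description precedes it below -/
import Mathlib

section
/- Let V be a countable set with symmetric b : V × V → [0,∞), b(x,x)=0, locally finite, μ : V → (0,∞), and a phase θ with θ(x,y) = −θ(y,x). Let H = Δ_{b,μ;θ} + W be the magnetic Schrödinger operator. If v ∈ ℓ²_μ(V) satisfies Hv = 0 pointwise and f : V → ℝ is finitely supported, then ⟨f v, H(f v)⟩ = (1/2) ∑_{x∈V} ∑_{y: b(x,y)>0} b(x,y) Re(e^{−iθ(x,y)} v(x) conj(v(y))) (f(x) − f(y))². -/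
/-!
Multiplying by `μ` and using the Leibniz rule
`μ(x) H(f v)(x) = f(x) μ(x) (H v)(x) + ∑_y b(x,y) e^{iθ(x,y)} v(y) (f(x) - f(y))`,
the equation `H v = 0` turns `⟨f v, H(f v)⟩` into `∑_{x,y} a(x,y) f(x) (f(x) - f(y))` for the
Hermitian kernel `a(x,y) = b(x,y) e^{-iθ(x,y)} v(x) conj(v(y))`. The equation `H v = 0` also says
that `∑_y b(x,y) e^{iθ(x,y)} v(y)` is a real multiple of `v(x)`, so the row sums of `a` are real;
together with Hermitian symmetry this makes the form real, and symmetrizing in `x ↔ y` gives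
half of `∑_{x,y} Re a(x,y) (f(x) - f(y))²`. Everything is a finite sum over the support of `f`
and its neighbours.
-/

open Complex Function ComplexConjugate

theorem tsum_tsum_eq_sum_sum {α β M : Type*} [AddCommMonoid M] [TopologicalSpace M]
    {f : α → β → M} {s : Finset α} {t : Finset β} (hf : ∀ x y, f x y ≠ 0 → x ∈ s ∧ y ∈ t) :
    ∑' x, ∑' y, f x y = ∑ x ∈ s, ∑ y ∈ t, f x y := by
  have hrow : ∀ x, ∑' y, f x y = ∑ y ∈ t, f x y := fun x =>
    tsum_eq_sum fun y hy => not_ne_iff.1 fun h => hy (hf x y h).2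
  simp only [hrow]
  exact tsum_eq_sum fun x hx => Finset.sum_eq_zero fun y _ => not_ne_iff.1 fun h => hx (hf x y h).1

theorem Set.Finite.exists_finset_support_subset {α M N : Type*} [Zero M] [Zero N] {f : α → M}
    (hf : (support f).Finite) {b : α → α → N} (hb : ∀ x, (support (b x)).Finite) :
    ∃ U : Finset α, support f ⊆ U ∧ ∀ x, f x ≠ 0 → support (b x) ⊆ U := by
  refine ⟨(hf.union (hf.biUnion fun x _ => hb x)).toFinset, ?_, fun x hx => ?_⟩
  · simp
  · intro y hy
    simp only [Set.Finite.coe_toFinset]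
    exact Or.inr (Set.mem_biUnion hx hy)

section Symmetrization

variable {ι : Type*} (s : Finset ι)

theorem Finset.two_mul_sum_sum_mul_sub_eq {R : Type*} [CommRing R] {r : ι → ι → R}
    (hr : ∀ x y, r y x = r x y) (f : ι → R) :
    2 * ∑ x ∈ s, ∑ y ∈ s, r x y * (f x * (f x - f y))
      = ∑ x ∈ s, ∑ y ∈ s, r x y * (f x - f y) ^ 2 := by
  have hswap : ∑ x ∈ s, ∑ y ∈ s, r x y * (f x * (f x - f y))
      = ∑ x ∈ s, ∑ y ∈ s, r x y * (f y * (f y - f x)) := by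
    rw [Finset.sum_comm]
    exact Finset.sum_congr rfl fun x _ => Finset.sum_congr rfl fun y _ => by rw [hr]
  rw [two_mul]
  nth_rw 2 [hswap]
  simp only [← Finset.sum_add_distrib]
  exact Finset.sum_congr rfl fun x _ => Finset.sum_congr rfl fun y _ => by ring

theorem Finset.conj_sum_sum_mul_ofReal_mul_ofReal {a : ι → ι → ℂ}
    (ha : ∀ x y, a y x = conj (a x y)) (f : ι → ℝ) :
    conj (∑ x ∈ s, ∑ y ∈ s, a x y * f x * f y) = ∑ x ∈ s, ∑ y ∈ s, a x y * f x * f y := by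
  simp only [map_sum, map_mul, conj_ofReal, ← ha]
  rw [Finset.sum_comm]
  exact Finset.sum_congr rfl fun x _ => Finset.sum_congr rfl fun y _ => by ring

theorem Finset.sum_sum_mul_ofReal_mul_sub_eq_half {a : ι → ι → ℂ}
    (ha : ∀ x y, a y x = conj (a x y)) (f : ι → ℝ)
    (hrow : ∀ x ∈ s, f x ≠ 0 → conj (∑ y ∈ s, a x y) = ∑ y ∈ s, a x y) :
    ∑ x ∈ s, ∑ y ∈ s, a x y * (f x * (f x - f y) : ℝ)
      = ((1 / 2 : ℝ) * ∑ x ∈ s, ∑ y ∈ s, (a x y).re * (f x - f y) ^ 2 : ℝ) := by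
  set L := ∑ x ∈ s, ∑ y ∈ s, a x y * (f x * (f x - f y) : ℝ)
  -- the first sum is real by `hrow`, the second by the Hermitian symmetry of `a`
  have hsplit : L = ∑ x ∈ s, (f x ^ 2 : ℝ) * ∑ y ∈ s, a x y
      - ∑ x ∈ s, ∑ y ∈ s, a x y * f x * f y := by
    simp only [L, Finset.mul_sum, ← Finset.sum_sub_distrib]
    exact Finset.sum_congr rfl fun x _ => Finset.sum_congr rfl fun y _ => by push_cast; ring
  have hreal : conj L = L := by
    rw [hsplit, map_sub, conj_sum_sum_mul_ofReal_mul_ofReal s ha, map_sum]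
    congr 1
    refine Finset.sum_congr rfl fun x hx => ?_
    rcases eq_or_ne (f x) 0 with hfx | hfx
    · simp [hfx]
    · rw [map_mul, conj_ofReal, hrow x hx hfx]
  have hre : 2 * L.re = ∑ x ∈ s, ∑ y ∈ s, (a x y).re * (f x - f y) ^ 2 := by
    rw [← two_mul_sum_sum_mul_sub_eq s (fun x y => by rw [ha, conj_re]) f]
    simp only [L, re_sum, re_mul_ofReal]
  rw [← conj_eq_iff_re.mp hreal, ← hre]
  push_cast
  ring

end Symmetrization

section Magnetic

variable {V : Type*}

def IsMagneticSchrodinger (b : V → V → ℝ) (μ : V → ℝ) (θ : V → V → ℝ) (W : V → ℝ)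
    (H : (V → ℂ) → V → ℂ) : Prop :=
  ∀ u x, H u x
    = (1 / (μ x : ℂ)) * ∑' y, (b x y : ℂ) * (u x - exp (θ x y * I) * u y) + (W x : ℂ) * u x

noncomputable def magneticKernel (b : V → V → ℝ) (θ : V → V → ℝ) (v : V → ℂ) (x y : V) : ℂ :=
  b x y * (exp (-θ x y * I) * v x * conj (v y))

variable {b : V → V → ℝ} {μ : V → ℝ} {θ : V → V → ℝ} {W : V → ℝ} {H : (V → ℂ) → V → ℂ}
  {U : Finset V} {x : V}

theorem IsMagneticSchrodinger.mul_apply_eq_sum (hH : IsMagneticSchrodinger b μ θ W H)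
    (hμ : μ x ≠ 0) (hbU : support (b x) ⊆ U) (u : V → ℂ) :
    μ x * H u x = ∑ y ∈ U, (b x y : ℂ) * (u x - exp (θ x y * I) * u y) + μ x * W x * u x := by
  rw [hH, mul_add, ← mul_assoc, mul_one_div_cancel (ofReal_ne_zero.2 hμ), one_mul, mul_assoc,
    tsum_eq_sum fun y hy => by rw [notMem_support.1 fun h => hy (hbU h)]; simp]

theorem IsMagneticSchrodinger.mul_apply_ofReal_mul (hH : IsMagneticSchrodinger b μ θ W H)
    (hμ : μ x ≠ 0) (hbU : support (b x) ⊆ U) (f : V → ℝ) (u : V → ℂ) :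
    μ x * H (fun y => f y * u y) x
      = f x * (μ x * H u x) + ∑ y ∈ U, b x y * exp (θ x y * I) * u y * (f x - f y) := by
  rw [hH.mul_apply_eq_sum hμ hbU, hH.mul_apply_eq_sum hμ hbU, mul_add, Finset.mul_sum,
    add_right_comm, ← Finset.sum_add_distrib]
  congr 1
  · exact Finset.sum_congr rfl fun y _ => by ring
  · ring

theorem IsMagneticSchrodinger.sum_mul_exp_mul_eq (hH : IsMagneticSchrodinger b μ θ W H)
    (hμ : μ x ≠ 0) (hbU : support (b x) ⊆ U) {u : V → ℂ} (hu : H u x = 0) :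
    ∑ y ∈ U, b x y * exp (θ x y * I) * u y = ((∑ y ∈ U, b x y + μ x * W x : ℝ) : ℂ) * u x := by
  have h := hH.mul_apply_eq_sum hμ hbU u
  rw [hu, mul_zero] at h
  simp only [mul_sub, Finset.sum_sub_distrib] at h
  push_cast
  rw [add_mul, Finset.sum_mul]
  simp only [← mul_assoc] at h
  linear_combination h

theorem magneticKernel_swap (hb : ∀ x y, b x y = b y x) (hθ : ∀ x y, θ x y = -θ y x)
    (v : V → ℂ) (x y : V) : magneticKernel b θ v y x = conj (magneticKernel b θ v x y) := by
  simp only [magneticKernel, map_mul, map_neg, conj_ofReal, conj_conj, ← exp_conj, conj_I,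
    hb y x, hθ y x]
  push_cast
  ring_nf

theorem IsMagneticSchrodinger.conj_sum_magneticKernel (hH : IsMagneticSchrodinger b μ θ W H)
    (hμ : μ x ≠ 0) (hbU : support (b x) ⊆ U) {v : V → ℂ} (hv : H v x = 0) :
    conj (∑ y ∈ U, magneticKernel b θ v x y) = ∑ y ∈ U, magneticKernel b θ v x y := by
  have h : ∑ y ∈ U, magneticKernel b θ v x y
      = v x * conj (∑ y ∈ U, b x y * exp (θ x y * I) * v y) := by
    rw [map_sum, Finset.mul_sum]
    refine Finset.sum_congr rfl fun y _ => ?_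
    simp only [magneticKernel, map_mul, conj_ofReal, ← exp_conj, conj_I]
    ring_nf
  rw [h, hH.sum_mul_exp_mul_eq hμ hbU hv]
  simp only [map_mul, conj_ofReal, conj_conj]
  ring

theorem IsMagneticSchrodinger.mul_ofReal_mul_conj_apply_eq_sum
    (hH : IsMagneticSchrodinger b μ θ W H) (hμ : μ x ≠ 0) {v : V → ℂ} (hv : H v x = 0)
    {f : V → ℝ} (hbU : f x ≠ 0 → support (b x) ⊆ U) :
    μ x * (f x * v x) * conj (H (fun y => f y * v y) x)
      = ∑ y ∈ U, magneticKernel b θ v x y * (f x * (f x - f y) : ℝ) := by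
  rcases eq_or_ne (f x) 0 with hfx | hfx
  · simp [hfx]
  calc μ x * (f x * v x) * conj (H (fun y => f y * v y) x)
      = f x * v x * conj (μ x * H (fun y => f y * v y) x) := by
        rw [map_mul, conj_ofReal]; ring
    _ = f x * v x * conj (∑ y ∈ U, b x y * exp (θ x y * I) * v y * (f x - f y)) := by
        rw [hH.mul_apply_ofReal_mul hμ (hbU hfx), hv, mul_zero, mul_zero, zero_add]
    _ = _ := by
        rw [map_sum, Finset.mul_sum]
        refine Finset.sum_congr rfl fun y _ => ?_
        simp only [magneticKernel, map_mul, map_sub, conj_ofReal, ← exp_conj, conj_I]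
        push_cast
        ring_nf

end Magnetic

theorem stmt2_general {V : Type*}
    (b : V → V → ℝ) (μ : V → ℝ) (θ : V → V → ℝ) (W : V → ℝ)
    (hb_nonneg : ∀ x y, 0 ≤ b x y) (hb_symm : ∀ x y, b x y = b y x)
    (hb_locfin : ∀ x, {y | 0 < b x y}.Finite)
    (hμ : ∀ x, 0 < μ x)
    (hθ : ∀ x y, θ x y = -θ y x)
    (H : (V → ℂ) → V → ℂ)
    (hH : ∀ u x, H u x
      = (1 / (μ x : ℂ)) * ∑' y, (b x y : ℂ) * (u x - Complex.exp (θ x y * Complex.I) * u y)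
        + (W x : ℂ) * u x)
    (v : V → ℂ)
    (hv_sol : ∀ x, H v x = 0)
    (f : V → ℝ) (hf : (Function.support f).Finite) :
    (∑' x, (μ x : ℂ) * ((f x : ℂ) * v x)
        * starRingEnd ℂ (H (fun y => (f y : ℂ) * v y) x))
      = ((1 / 2 : ℝ) * ∑' x, ∑' y, b x y
          * (Complex.exp (-θ x y * Complex.I) * v x * starRingEnd ℂ (v y)).re
          * (f x - f y) ^ 2 : ℝ) := by
  have hH : IsMagneticSchrodinger b μ θ W H := hH
  have hb_fin : ∀ x, (support (b x)).Finite := fun x =>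
    (hb_locfin x).subset fun y hy => (hb_nonneg x y).lt_of_ne' hy
  obtain ⟨U, hfU, hbU⟩ := hf.exists_finset_support_subset hb_fin
  have hLHS : ∑' x, (μ x : ℂ) * ((f x : ℂ) * v x) * conj (H (fun y => (f y : ℂ) * v y) x)
      = ∑ x ∈ U, ∑ y ∈ U, magneticKernel b θ v x y * (f x * (f x - f y) : ℝ) := by
    rw [tsum_eq_sum fun x hx => by simp [notMem_support.1 fun h => hx (hfU h)]]
    exact Finset.sum_congr rfl fun x _ =>
      hH.mul_ofReal_mul_conj_apply_eq_sum (hμ x).ne' (hv_sol x) (hbU x)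
  have hRHS : ∑' x, ∑' y, b x y * (exp (-θ x y * I) * v x * conj (v y)).re * (f x - f y) ^ 2
      = ∑ x ∈ U, ∑ y ∈ U, (magneticKernel b θ v x y).re * (f x - f y) ^ 2 := by
    have hedge : ∀ x y, b x y ≠ 0 → f x ≠ 0 ∨ f y ≠ 0 → x ∈ U ∧ y ∈ U := by
      rintro x y hbxy (hfx | hfy)
      · exact ⟨hfU hfx, hbU x hfx hbxy⟩
      · exact ⟨hbU y hfy (by rwa [mem_support, hb_symm]), hfU hfy⟩
    rw [tsum_tsum_eq_sum_sum fun x y hxy => hedge x y (by contrapose! hxy; simp [hxy])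
      (by contrapose! hxy; simp [hxy])]
    simp only [magneticKernel, re_ofReal_mul]
  rw [hLHS, hRHS]
  exact Finset.sum_sum_mul_ofReal_mul_sub_eq_half U (magneticKernel_swap hb_symm hθ v) f
    fun x _ hfx => hH.conj_sum_magneticKernel (hμ x).ne' (hbU x hfx) (hv_sol x)

theorem stmt2 {V : Type*} [Countable V]
    (b : V → V → ℝ) (μ : V → ℝ) (θ : V → V → ℝ) (W : V → ℝ)
    (hb_nonneg : ∀ x y, 0 ≤ b x y) (hb_symm : ∀ x y, b x y = b y x)
    (hb_diag : ∀ x, b x x = 0)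
    (hb_locfin : ∀ x, {y | 0 < b x y}.Finite)
    (hμ : ∀ x, 0 < μ x)
    (hθ : ∀ x y, θ x y = -θ y x)
    (H : (V → ℂ) → V → ℂ)
    (hH : ∀ u x, H u x
      = (1 / (μ x : ℂ)) * ∑' y, (b x y : ℂ) * (u x - Complex.exp (θ x y * Complex.I) * u y)
        + (W x : ℂ) * u x)
    (v : V → ℂ) (hv_l2 : Summable fun x => μ x * ‖v x‖ ^ 2)
    (hv_sol : ∀ x, H v x = 0)
    (f : V → ℝ) (hf : (Function.support f).Finite) :
    (∑' x, (μ x : ℂ) * ((f x : ℂ) * v x)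
        * starRingEnd ℂ (H (fun y => (f y : ℂ) * v y) x))
      = ((1 / 2 : ℝ) * ∑' x, ∑' y, b x y
          * (Complex.exp (-θ x y * Complex.I) * v x * starRingEnd ℂ (v y)).re
          * (f x - f y) ^ 2 : ℝ) :=
  stmt2_general b μ θ W hb_nonneg hb_symm hb_locfin hμ hθ H hH v hv_sol f hf
end

section
/- Let G = (V,E) be a graph with edge weights b : V × V → [0,∞) (symmetric, vanishing on the diagonal), μ : V → (0,∞), and phase θ with θ(x,y) = −θ(y,x). Suppose (V_l, E_l)_{l∈L} is a family of finite subgraphs with V = ⋃_l V_l and for every edge {x,y} ∈ E, 1 ≤ #{l : {x,y} ∈ E_l} ≤ m (a good covering of degree m). For each l, let p_l ≥ 0 be a constant such that for every u : V_l → ℂ, ∑_{{x,y}∈E_l} |u(x) − e^{iθ(x,y)}u(y)|² ≥ p_l ∑_{x∈V_l} μ(x)|u(x)|². Define W_e(x) = (1/m) ∑_{l : x ∈ V_l} p_l · inf_{{y,z}∈E_l} b(y,z). Then for every finitely supported u : V → ℂ and every real potential W, ⟨u, Hu⟩ ≥ ∑_{x∈V} μ(x)(W_e(x) + W(x)) |u(x)|²,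 where H = Δ_{b,μ;θ} + W. -/
/-!
Multiply the lower bound `p l · ∑_{V_l} μ|u|² ≤ ½ ∑_{E_l} |u x - e^{iθ} u y|²` of each subgraph by
its smallest edge weight and sum over `l`: the left-hand sides add up to `m · ∑ μ W_e |u|²`, the
right-hand sides to at most `½ ∑_l ∑_{E_l} b |u x - e^{iθ} u y|²`, and since every edge lies in at most
`m` subgraphs this is at most `m/2` times the Dirichlet sum `∑_{x,y} b |u x - e^{iθ} u y|²`. Green's
formula, which pairs `(x, y)` with `(y, x)` using `b x y = b y x` and `e^{iθ y x} = conj e^{iθ x y}`,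
identifies `Re ⟨u, H u⟩` with half the Dirichlet sum plus `∑ μ W |u|²`.

Everything reduces to finite sums because `u` has finite support in a locally finite graph, and only
finitely many subgraphs contribute to `W_e` on that support: testing the bound of a subgraph with
`p l > 0` on a delta function shows that each of its vertices carries one of its edges.
-/

open Finset Complex
open scoped ComplexConjugate

section Covering

variable {ι V α : Type*}

theorem sum_sum_le_mul_sum_of_card_filter_le [DecidableEq α] (Λ : Finset ι)
    (E : ι → Finset α) (T : Finset α) {f : α → ℝ} {m : ℕ} (hf : ∀ a, 0 ≤ f a)
    (hT : ∀ i ∈ Λ, ∀ a ∈ E i, f a ≠ 0 → a ∈ T)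
    (hmult : ∀ a, f a ≠ 0 → #{i ∈ Λ | a ∈ E i} ≤ m) :
    ∑ i ∈ Λ, ∑ a ∈ E i, f a ≤ m * ∑ a ∈ T, f a := by
  have hrestrict : ∀ i ∈ Λ, ∑ a ∈ E i, f a = ∑ a ∈ T, if a ∈ E i then f a else 0 :=
    fun i hi => by
      rw [sum_ite_mem]
      exact (sum_subset inter_subset_right fun a ha hnot => by
        by_contra hfa; exact hnot (mem_inter.2 ⟨hT i hi a ha hfa, ha⟩)).symm
  calc ∑ i ∈ Λ, ∑ a ∈ E i, f a = ∑ a ∈ T, ∑ i ∈ Λ, if a ∈ E i then f a else 0 := by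
        rw [sum_congr rfl hrestrict, sum_comm]
    _ = ∑ a ∈ T, #{i ∈ Λ | a ∈ E i} * f a := by
        simp only [← sum_filter, sum_const, nsmul_eq_mul]
    _ ≤ ∑ a ∈ T, m * f a := by
        refine sum_le_sum fun a _ => ?_
        by_cases hfa : f a = 0
        · simp [hfa]
        · exact mul_le_mul_of_nonneg_right (by exact_mod_cast hmult a hfa) (hf a)
    _ = m * ∑ a ∈ T, f a := (mul_sum _ _ _).symm

theorem sum_mul_one_div_mul_sum_le_of_cover [DecidableEq V] [DecidableEq α]
    (Λ : Finset ι) (Vl : ι → Finset V) (El : ι → Finset α) (S : Finset V) (T : Finset α)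
    {ν : V → ℝ} {c : ι → ℝ} {f : α → ℝ} {m : ℕ} (hm : m ≠ 0)
    (hν : ∀ x ∉ S, ν x = 0) (hf : ∀ a, 0 ≤ f a)
    (hc : ∀ i ∈ Λ, c i * ∑ x ∈ Vl i, ν x ≤ ∑ a ∈ El i, f a)
    (hT : ∀ i ∈ Λ, ∀ a ∈ El i, f a ≠ 0 → a ∈ T)
    (hmult : ∀ a, f a ≠ 0 → #{i ∈ Λ | a ∈ El i} ≤ m) :
    ∑ x ∈ S, ν x * (1 / m * ∑ i ∈ Λ with x ∈ Vl i, c i) ≤ ∑ a ∈ T, f a := by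
  have hswap : ∑ x ∈ S, ∑ i ∈ Λ with x ∈ Vl i, ν x * c i = ∑ i ∈ Λ, c i * ∑ x ∈ Vl i, ν x := by
    rw [sum_comm' (t' := Λ) (s' := fun i => (Vl i).filter (· ∈ S)) (by simp; tauto)]
    refine sum_congr rfl fun i _ => ?_
    rw [mul_sum, sum_filter_of_ne fun x _ hx => by_contra fun hxS => hx (by simp [hν x hxS])]
    exact sum_congr rfl fun _ _ => mul_comm _ _
  calc ∑ x ∈ S, ν x * (1 / m * ∑ i ∈ Λ with x ∈ Vl i, c i)
        = 1 / m * ∑ i ∈ Λ, c i * ∑ x ∈ Vl i, ν x := by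
        rw [← hswap, mul_sum]
        simp only [mul_sum]
        exact sum_congr rfl fun _ _ => sum_congr rfl fun _ _ => by ring
    _ ≤ 1 / m * ∑ i ∈ Λ, ∑ a ∈ El i, f a := by gcongr with i hi; exact hc i hi
    _ ≤ 1 / m * (m * ∑ a ∈ T, f a) := by
        gcongr; exact sum_sum_le_mul_sum_of_card_filter_le Λ El T hf hT hmult
    _ = ∑ a ∈ T, f a := by field_simp

theorem finite_setOf_exists_mk_mem {b : V → V → ℝ} (El : ι → Finset (V × V))
    (S : Finset V) (hloc : ∀ x, {y | 0 < b x y}.Finite) (hEl : ∀ i, ∀ e ∈ El i, 0 < b e.1 e.2)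
    (hmult : ∀ x y, 0 < b x y → {i | (x, y) ∈ El i}.Finite) :
    {i | ∃ x ∈ S, ∃ y, (x, y) ∈ El i}.Finite := by
  refine (S.finite_toSet.biUnion fun x _ => (hloc x).biUnion fun y hy => hmult x y hy).subset ?_
  rintro i ⟨x, hx, y, hxy⟩
  simp only [Set.mem_iUnion]
  exact ⟨x, hx, y, hEl i _ hxy, hxy⟩

end Covering

section Magnetic

variable {V : Type*}

noncomputable def magneticDiff (θ : V → V → ℝ) (u : V → ℂ) (x y : V) : ℂ :=
  u x - exp (θ x y * I) * u y

noncomputable def dirichletSum (b θ : V → V → ℝ) (u : V → ℂ) (F : Finset V) : ℝ :=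
  ∑ x ∈ F, ∑ y ∈ F, b x y * ‖magneticDiff θ u x y‖ ^ 2

noncomputable def minEdgeWeight (b : V → V → ℝ) (Es : Finset (V × V)) : ℝ :=
  sInf ((fun e : V × V => b e.1 e.2) '' Es)

theorem sub_mul_conj_add_sub_conj_mul_conj {a c z : ℂ} (hz : ‖z‖ = 1) :
    (a - z * c) * conj a + (c - conj z * a) * conj c = ((‖a - z * c‖ ^ 2 : ℝ) : ℂ) := by
  have hzz : z * conj z = 1 := by rw [mul_conj', hz]; simp
  push_cast
  rw [← mul_conj']
  simp only [map_sub, map_mul]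
  linear_combination (-c * conj c) * hzz

theorem sum_sum_mul_magneticDiff_mul_conj {b θ : V → V → ℝ} (hb : ∀ x y, b x y = b y x)
    (hθ : ∀ x y, θ x y = -θ y x) (u : V → ℂ) (F : Finset V) :
    ∑ x ∈ F, ∑ y ∈ F, (b x y : ℂ) * magneticDiff θ u x y * conj (u x)
      = ((1 / 2 * dirichletSum b θ u F : ℝ) : ℂ) := by
  have hpair : ∀ x y, (b x y : ℂ) * magneticDiff θ u x y * conj (u x)
      + (b y x : ℂ) * magneticDiff θ u y x * conj (u y)
        = ((b x y * ‖magneticDiff θ u x y‖ ^ 2 : ℝ) : ℂ) := by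
    intro x y
    have hconj : exp (θ y x * I) = conj (exp (θ x y * I)) := by
      rw [← exp_conj, hθ y x]; simp
    rw [hb y x, ofReal_mul, magneticDiff, magneticDiff, hconj,
      ← sub_mul_conj_add_sub_conj_mul_conj (norm_exp_ofReal_mul_I (θ x y))]
    ring
  have hdouble : ∑ x ∈ F, ∑ y ∈ F, (b x y : ℂ) * magneticDiff θ u x y * conj (u x)
      + ∑ x ∈ F, ∑ y ∈ F, (b x y : ℂ) * magneticDiff θ u x y * conj (u x)
        = ((dirichletSum b θ u F : ℝ) : ℂ) := by
    conv_lhs => arg 2; rw [sum_comm]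
    simp only [← sum_add_distrib, hpair, dirichletSum]
    push_cast
    rfl
  push_cast at hdouble ⊢
  linear_combination hdouble / 2

theorem exists_superset_forall_ne_zero_mem {b : V → V → ℝ} (hb : ∀ x y, 0 ≤ b x y)
    (hloc : ∀ x, {y | 0 < b x y}.Finite) (S : Finset V) :
    ∃ F : Finset V, S ⊆ F ∧ ∀ x ∈ S, ∀ y, b x y ≠ 0 → y ∈ F := by
  classical
  refine ⟨S ∪ S.biUnion fun x => (hloc x).toFinset, subset_union_left, fun x hx y hxy => ?_⟩
  exact mem_union_right _ <| mem_biUnion.2 ⟨x, hx, by simpa using (hb x y).lt_of_ne' hxy⟩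

theorem re_tsum_eq_half_dirichletSum_add {b θ : V → V → ℝ} {μ W : V → ℝ}
    {H : (V → ℂ) → V → ℂ} {u : V → ℂ} {S F : Finset V} (hb : ∀ x y, b x y = b y x)
    (hθ : ∀ x y, θ x y = -θ y x) (hμ : ∀ x, μ x ≠ 0)
    (hH : ∀ x, H u x
      = 1 / (μ x : ℂ) * ∑' y, (b x y : ℂ) * magneticDiff θ u x y + (W x : ℂ) * u x)
    (hu : ∀ x ∉ S, u x = 0) (hSF : S ⊆ F) (hF : ∀ x ∈ S, ∀ y, b x y ≠ 0 → y ∈ F) :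
    (∑' x, (μ x : ℂ) * H u x * conj (u x)).re
      = 1 / 2 * dirichletSum b θ u F + ∑ x ∈ S, μ x * W x * ‖u x‖ ^ 2 := by
  have hterm : ∀ x ∈ S, (μ x : ℂ) * H u x * conj (u x)
      = (∑ y ∈ F, (b x y : ℂ) * magneticDiff θ u x y) * conj (u x)
        + ((μ x * W x * ‖u x‖ ^ 2 : ℝ) : ℂ) := by
    intro x hx
    have hfin : ∀ y ∉ F, (b x y : ℂ) * magneticDiff θ u x y = 0 := fun y hy => by
      rw [not_imp_comm.1 (hF x hx y) hy]; simp
    have hμx : (μ x : ℂ) ≠ 0 := ofReal_ne_zero.2 (hμ x)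
    rw [hH, tsum_eq_sum hfin]
    push_cast
    rw [← mul_conj']
    field_simp
  have hext : ∑ x ∈ S, (∑ y ∈ F, (b x y : ℂ) * magneticDiff θ u x y) * conj (u x)
      = ∑ x ∈ F, ∑ y ∈ F, (b x y : ℂ) * magneticDiff θ u x y * conj (u x) := by
    rw [sum_subset hSF fun x _ hx => by simp [hu x hx]]
    simp only [sum_mul]
  rw [tsum_eq_sum fun x hx => by simp [hu x hx], sum_congr rfl hterm, sum_add_distrib, hext,
    sum_sum_mul_magneticDiff_mul_conj hb hθ, ← ofReal_sum, add_re, ofReal_re, ofReal_re]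

theorem exists_mk_mem_of_lowerBound_pos [DecidableEq V] {μ : V → ℝ} {θ : V → V → ℝ}
    {Vs : Finset V} {Es : Finset (V × V)} {p : ℝ} (hEs : ∀ x y, (x, y) ∈ Es ↔ (y, x) ∈ Es)
    (hp : ∀ u : V → ℂ, p * ∑ x ∈ Vs, μ x * ‖u x‖ ^ 2
      ≤ 1 / 2 * ∑ e ∈ Es, ‖magneticDiff θ u e.1 e.2‖ ^ 2)
    (hp0 : 0 < p) {x : V} (hx : x ∈ Vs) (hμx : 0 < μ x) : ∃ y, (x, y) ∈ Es := by
  by_contra! hisolated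
  have hdelta := hp (Pi.single x 1)
  have hvertex : ∀ e ∈ Es, e.1 ≠ x ∧ e.2 ≠ x := by
    rintro ⟨y, z⟩ he
    refine ⟨?_, ?_⟩ <;> rintro rfl
    · exact hisolated z he
    · exact hisolated y ((hEs _ _).1 he)
  rw [sum_eq_single_of_mem x hx fun y _ hyx => by simp [hyx],
    sum_eq_zero fun e he => by simp [magneticDiff, hvertex e he]] at hdelta
  simp at hdelta
  nlinarith

theorem mul_minEdgeWeight_mul_sum_le {b : V → V → ℝ} {μ : V → ℝ} {θ : V → V → ℝ} {u : V → ℂ}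
    {Vs : Finset V} {Es : Finset (V × V)} {p : ℝ} (hb : ∀ e ∈ Es, 0 ≤ b e.1 e.2)
    (hp : p * ∑ x ∈ Vs, μ x * ‖u x‖ ^ 2 ≤ 1 / 2 * ∑ e ∈ Es, ‖magneticDiff θ u e.1 e.2‖ ^ 2) :
    p * minEdgeWeight b Es * ∑ x ∈ Vs, μ x * ‖u x‖ ^ 2
      ≤ ∑ e ∈ Es, 1 / 2 * (b e.1 e.2 * ‖magneticDiff θ u e.1 e.2‖ ^ 2) := by
  set β := minEdgeWeight b Es
  have hβ0 : 0 ≤ β := Real.sInf_nonneg (by rintro _ ⟨e, he, rfl⟩; exact hb e he)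
  have hβle : ∀ e ∈ Es, β ≤ b e.1 e.2 := fun e he =>
    csInf_le (Es.finite_toSet.image _).bddBelow ⟨e, he, rfl⟩
  calc p * β * ∑ x ∈ Vs, μ x * ‖u x‖ ^ 2 = β * (p * ∑ x ∈ Vs, μ x * ‖u x‖ ^ 2) := by ring
    _ ≤ β * (1 / 2 * ∑ e ∈ Es, ‖magneticDiff θ u e.1 e.2‖ ^ 2) := by gcongr
    _ = ∑ e ∈ Es, 1 / 2 * (β * ‖magneticDiff θ u e.1 e.2‖ ^ 2) := by
      rw [mul_sum, mul_sum]; exact sum_congr rfl fun _ _ => by ring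
    _ ≤ _ := by gcongr with e he; exact hβle e he

theorem finsum_mem_eq_sum_filter_of_lowerBound {L : Type*} [DecidableEq V] {μ : V → ℝ}
    {θ : V → V → ℝ} {Vl : L → Finset V} {El : L → Finset (V × V)} {p c : L → ℝ}
    (hEl : ∀ l x y, (x, y) ∈ El l ↔ (y, x) ∈ El l) (hp0 : ∀ l, 0 ≤ p l)
    (hp : ∀ l, ∀ u : V → ℂ, p l * ∑ x ∈ Vl l, μ x * ‖u x‖ ^ 2
      ≤ 1 / 2 * ∑ e ∈ El l, ‖magneticDiff θ u e.1 e.2‖ ^ 2)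
    {x : V} (hμx : 0 < μ x) (Λ : Finset L) (hΛ : ∀ l y, (x, y) ∈ El l → l ∈ Λ) :
    ∑ᶠ l ∈ {l | x ∈ Vl l}, p l * c l = ∑ l ∈ Λ with x ∈ Vl l, p l * c l := by
  refine finsum_cond_eq_sum_of_cond_iff _ fun {l} hl =>
    ⟨fun hxl => mem_filter.2 ⟨?_, hxl⟩, fun hl' => (mem_filter.1 hl').2⟩
  have hpl : 0 < p l := (hp0 l).lt_of_ne (left_ne_zero_of_mul hl).symm
  obtain ⟨y, hxy⟩ := exists_mk_mem_of_lowerBound_pos (hEl l) (hp l) hpl hxl hμx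
  exact hΛ l y hxy

theorem sum_mul_sum_minEdgeWeight_le_half_dirichletSum {L : Type*} [DecidableEq V]
    {b : V → V → ℝ} {μ : V → ℝ} {θ : V → V → ℝ} {Vl : L → Finset V} {El : L → Finset (V × V)}
    {p : L → ℝ} {m : ℕ} {u : V → ℂ} {S F : Finset V} (hm : m ≠ 0)
    (hb_nonneg : ∀ x y, 0 ≤ b x y) (hb_symm : ∀ x y, b x y = b y x)
    (hEl : ∀ l, ∀ e ∈ El l, 0 < b e.1 e.2)
    (hdeg : ∀ x y, 0 < b x y →
      1 ≤ {l | (x, y) ∈ El l}.ncard ∧ {l | (x, y) ∈ El l}.ncard ≤ m)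
    (hp : ∀ l, p l * ∑ x ∈ Vl l, μ x * ‖u x‖ ^ 2
      ≤ 1 / 2 * ∑ e ∈ El l, ‖magneticDiff θ u e.1 e.2‖ ^ 2)
    (hu : ∀ x ∉ S, u x = 0) (hSF : S ⊆ F) (hF : ∀ x ∈ S, ∀ y, b x y ≠ 0 → y ∈ F)
    (Λ : Finset L) :
    ∑ x ∈ S, μ x * ‖u x‖ ^ 2 * (1 / m * ∑ l ∈ Λ with x ∈ Vl l, p l * minEdgeWeight b (El l))
      ≤ 1 / 2 * dirichletSum b θ u F := by
  have hedge : ∀ x y, b x y ≠ 0 → (x ∈ S ∨ y ∈ S) → (x, y) ∈ F ×ˢ F := by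
    rintro x y hxy (hx | hy)
    · exact mem_product.2 ⟨hSF hx, hF x hx y hxy⟩
    · exact mem_product.2 ⟨hF y hy x (hb_symm x y ▸ hxy), hSF hy⟩
  refine (sum_mul_one_div_mul_sum_le_of_cover Λ Vl El S (F ×ˢ F) hm
    (f := fun e => 1 / 2 * (b e.1 e.2 * ‖magneticDiff θ u e.1 e.2‖ ^ 2))
    (fun x hx => by simp [hu x hx]) (fun e => by have := hb_nonneg e.1 e.2; positivity)
    (fun l _ => mul_minEdgeWeight_mul_sum_le (fun e _ => hb_nonneg _ _) (hp l))
    (fun l _ e he hfe => hedge e.1 e.2 (hEl l e he).ne' ?_) fun e hfe => ?_).trans_eq ?_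
  · by_contra! hout
    simp [magneticDiff, hu _ hout.1, hu _ hout.2] at hfe
  · have hbe : 0 < b e.1 e.2 := (hb_nonneg _ _).lt_of_ne' (by rintro h; simp [h] at hfe)
    have hfin := Set.finite_of_ncard_pos (hdeg _ _ hbe).1
    rw [← Set.ncard_coe_finset]
    exact (Set.ncard_le_ncard (fun l hl => (mem_filter.1 hl).2) hfin).trans (hdeg _ _ hbe).2
  · rw [sum_product, dirichletSum, mul_sum]
    simp only [mul_sum]

end Magnetic

theorem stmt13_general {V L : Type*}
    (b : V → V → ℝ) (μ : V → ℝ) (θ : V → V → ℝ) (W : V → ℝ) (m : ℕ) (hm : 1 ≤ m)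
    (hb_nonneg : ∀ x y, 0 ≤ b x y) (hb_symm : ∀ x y, b x y = b y x)
    (hb_locfin : ∀ x, {y | 0 < b x y}.Finite)
    (hμ : ∀ x, 0 < μ x)
    (hθ : ∀ x y, θ x y = -θ y x)
    (Vl : L → Finset V) (El : L → Finset (V × V))
    -- the subgraphs consist of edges of `G` with endpoints in `Vl`
    (hEl : ∀ l, ∀ e ∈ El l, 0 < b e.1 e.2 ∧ e.1 ∈ Vl l ∧ e.2 ∈ Vl l)
    (hEl_symm : ∀ l x y, (x, y) ∈ El l ↔ (y, x) ∈ El l)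
    -- good covering of degree `m`
    (hdeg : ∀ x y, 0 < b x y →
      1 ≤ {l | (x, y) ∈ El l}.ncard ∧ {l | (x, y) ∈ El l}.ncard ≤ m)
    -- `p l` is a lower bound for the bottom of the spectrum of the magnetic
    -- Laplacian with weight `1` on the subgraph `l` (ordered pairs, hence the `1/2`)
    (p : L → ℝ) (hp_nonneg : ∀ l, 0 ≤ p l)
    (hp : ∀ l, ∀ u : V → ℂ,
      p l * ∑ x ∈ Vl l, μ x * ‖u x‖ ^ 2
        ≤ (1 / 2) * ∑ e ∈ El l, ‖u e.1 - Complex.exp (θ e.1 e.2 * Complex.I) * u e.2‖ ^ 2)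
    -- the effective potential
    (We : V → ℝ)
    (hWe : ∀ x, We x = (1 / m) * ∑ᶠ l ∈ {l | x ∈ Vl l},
      p l * sInf ((fun e : V × V => b e.1 e.2) '' (El l : Set (V × V))))
    -- the magnetic Schrödinger operator
    (H : (V → ℂ) → V → ℂ)
    (hH : ∀ u x, H u x
      = (1 / (μ x : ℂ)) * ∑' y, (b x y : ℂ) * (u x - Complex.exp (θ x y * Complex.I) * u y)
        + (W x : ℂ) * u x)
    (u : V → ℂ) (hu : (Function.support u).Finite) :
    (∑' x, μ x * (We x + W x) * ‖u x‖ ^ 2)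
      ≤ (∑' x, (μ x : ℂ) * H u x * starRingEnd ℂ (u x)).re := by
  classical
  set S := hu.toFinset
  have hu0 : ∀ x ∉ S, u x = 0 := fun x hx => by simpa [S] using hx
  obtain ⟨F, hSF, hNF⟩ := exists_superset_forall_ne_zero_mem hb_nonneg hb_locfin S
  set Λ := (finite_setOf_exists_mk_mem El S hb_locfin (fun l e he => (hEl l e he).1)
    fun x y hxy => Set.finite_of_ncard_pos (hdeg x y hxy).1).toFinset
  have hWeS : ∀ x ∈ S,
      We x = 1 / m * ∑ l ∈ Λ with x ∈ Vl l, p l * minEdgeWeight b (El l) := fun x hx => by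
    rw [hWe, finsum_mem_eq_sum_filter_of_lowerBound hEl_symm hp_nonneg hp (hμ x) Λ
      fun l y hxy => (Set.Finite.mem_toFinset _).2 ⟨x, hx, y, hxy⟩]
    rfl
  have hpot := sum_mul_sum_minEdgeWeight_le_half_dirichletSum (by omega) hb_nonneg hb_symm
    (fun l e he => (hEl l e he).1) hdeg (fun l => hp l u) hu0 hSF hNF Λ
  rw [re_tsum_eq_half_dirichletSum_add hb_symm hθ (fun x => (hμ x).ne') (hH u) hu0 hSF hNF,
    tsum_eq_sum (s := S) fun x hx => by simp [hu0 x hx]]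
  calc ∑ x ∈ S, μ x * (We x + W x) * ‖u x‖ ^ 2
      = ∑ x ∈ S, μ x * ‖u x‖ ^ 2 * (1 / m * ∑ l ∈ Λ with x ∈ Vl l, p l * minEdgeWeight b (El l))
        + ∑ x ∈ S, μ x * W x * ‖u x‖ ^ 2 := by
        rw [← sum_add_distrib]
        exact sum_congr rfl fun x hx => by rw [hWeS x hx]; ring
    _ ≤ _ := add_le_add_left hpot _

theorem stmt13 {V L : Type*} [Countable V]
    (b : V → V → ℝ) (μ : V → ℝ) (θ : V → V → ℝ) (W : V → ℝ) (m : ℕ) (hm : 1 ≤ m)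
    (hb_nonneg : ∀ x y, 0 ≤ b x y) (hb_symm : ∀ x y, b x y = b y x)
    (hb_diag : ∀ x, b x x = 0)
    (hb_locfin : ∀ x, {y | 0 < b x y}.Finite)
    (hμ : ∀ x, 0 < μ x)
    (hθ : ∀ x y, θ x y = -θ y x)
    (Vl : L → Finset V) (El : L → Finset (V × V))
    -- the subgraphs consist of edges of `G` with endpoints in `Vl`
    (hEl : ∀ l, ∀ e ∈ El l, 0 < b e.1 e.2 ∧ e.1 ∈ Vl l ∧ e.2 ∈ Vl l)
    (hEl_symm : ∀ l x y, (x, y) ∈ El l ↔ (y, x) ∈ El l)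
    -- good covering of degree `m`
    (hcover : ∀ x : V, ∃ l, x ∈ Vl l)
    (hdeg : ∀ x y, 0 < b x y →
      1 ≤ {l | (x, y) ∈ El l}.ncard ∧ {l | (x, y) ∈ El l}.ncard ≤ m)
    -- `p l` is a lower bound for the bottom of the spectrum of the magnetic
    -- Laplacian with weight `1` on the subgraph `l` (ordered pairs, hence the `1/2`)
    (p : L → ℝ) (hp_nonneg : ∀ l, 0 ≤ p l)
    (hp : ∀ l, ∀ u : V → ℂ,
      p l * ∑ x ∈ Vl l, μ x * ‖u x‖ ^ 2
        ≤ (1 / 2) * ∑ e ∈ El l, ‖u e.1 - Complex.exp (θ e.1 e.2 * Complex.I) * u e.2‖ ^ 2)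
    -- the effective potential
    (We : V → ℝ)
    (hWe : ∀ x, We x = (1 / m) * ∑ᶠ l ∈ {l | x ∈ Vl l},
      p l * sInf ((fun e : V × V => b e.1 e.2) '' (El l : Set (V × V))))
    -- the magnetic Schrödinger operator
    (H : (V → ℂ) → V → ℂ)
    (hH : ∀ u x, H u x
      = (1 / (μ x : ℂ)) * ∑' y, (b x y : ℂ) * (u x - Complex.exp (θ x y * Complex.I) * u y)
        + (W x : ℂ) * u x)
    (u : V → ℂ) (hu : (Function.support u).Finite) :
    (∑' x, μ x * (We x + W x) * ‖u x‖ ^ 2)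
      ≤ (∑' x, (μ x : ℂ) * H u x * starRingEnd ℂ (u x)).re :=
  stmt13_general b μ θ W m hm hb_nonneg hb_symm hb_locfin hμ hθ Vl El hEl hEl_symm hdeg p hp_nonneg
    hp We hWe H hH u hu
end
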